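/- arXiv:2002.11984 — 2 statements merged into one kernel-verified Lean document; each statement's English description precedes it below -/
import Mathlib

section
/- There exist positive constants C and C′ such that for every real x > 5, | Σ_{n ≤ x} (|μ|*μ)(n)/n − 1/ζ(2) | ≤ C′ · δ(x), where δ(x) = exp(−C (log x)^{3/5}/(log log x)^{1/5}). -/
open Finset

/-- `δ(x) = exp(-C (log x)^{3/5} / (log log x)^{1/5})`. -/
noncomputable def deltaFn (C x : ℝ) : ℝ :=
  Real.exp (-C * (Real.log x) ^ ((3 : ℝ) / 5) / (Real.log (Real.log x)) ^ ((1 : ℝ) / 5))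

/-- The Dirichlet convolution `|μ| * μ` evaluated at `n`. -/
def absMoebiusConvMoebius (n : ℕ) : ℤ :=
  ∑ d ∈ n.divisors, |ArithmeticFunction.moebius d| * ArithmeticFunction.moebius (n / d)

/-!
Since `|μ| = μ²` is multiplicative with `|μ|(p^k) = 1 - [k ≥ 2]`, it is `ζ` convolved with the
function `s` that is `μ(a)` at `n = a²` and `0` off the squares; hence `|μ| * μ = s`. The partial
sum up to `x` is therefore `∑_{a ≤ √x} μ(a)/a²`, which differs from `∑ μ(a)/a² = 1/ζ(2)` by at most
`∑_{a > √x} 1/a² ≤ 2/√x`. Finally `x^{-1/2} ≤ δ(x)` for small `C`, because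
`(log x)^{3/5} / (log log x)^{1/5} ≤ log x / (log log 5)^{1/5}` for `x ≥ 5`.
-/

open ArithmeticFunction
open scoped ArithmeticFunction.Moebius ArithmeticFunction.zeta LSeries.notation

lemma Nat.Coprime.isSquare_left_of_isSquare_mul {m n : ℕ} (h : m.Coprime n)
    (hmn : IsSquare (m * n)) : IsSquare m := by
  obtain ⟨r, hr⟩ := hmn
  obtain ⟨d, rfl⟩ := exists_eq_pow_of_mul_eq_pow (Nat.isUnit_iff.mpr h) (hr.trans (sq r).symm)
  exact IsSquare.sq d

lemma Nat.Prime.isSquare_pow_iff {p i : ℕ} (hp : p.Prime) : IsSquare (p ^ i) ↔ Even i := by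
  refine ⟨fun ⟨r, hr⟩ => ?_, fun ⟨j, hj⟩ => ⟨p ^ j, by rw [hj, pow_add]⟩⟩
  obtain ⟨j, -, rfl⟩ := (Nat.dvd_prime_pow hp).mp (Dvd.intro r hr.symm)
  rw [← pow_add] at hr
  exact ⟨j, Nat.pow_right_injective hp.two_le hr⟩

namespace ArithmeticFunction

def absMoebius : ArithmeticFunction ℤ := ⟨fun n => |μ n|, by simp⟩

@[simp] lemma absMoebius_apply (n : ℕ) : absMoebius n = |μ n| := rfl

lemma isMultiplicative_absMoebius : absMoebius.IsMultiplicative := by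
  have : absMoebius = pmul μ μ := by
    ext n
    rw [absMoebius_apply, pmul_apply, ← sq, moebius_sq, abs_moebius]
  exact this ▸ isMultiplicative_moebius.pmul isMultiplicative_moebius

def moebiusOnSquares : ArithmeticFunction ℤ :=
  ⟨fun n => if IsSquare n then μ n.sqrt else 0, by simp⟩

lemma moebiusOnSquares_apply (n : ℕ) :
    moebiusOnSquares n = if IsSquare n then μ n.sqrt else 0 := rfl

@[simp] lemma moebiusOnSquares_sq (a : ℕ) : moebiusOnSquares (a ^ 2) = μ a := by
  simp [moebiusOnSquares_apply, IsSquare.sq, Nat.sqrt_eq']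

lemma moebiusOnSquares_of_not_isSquare {n : ℕ} (h : ¬IsSquare n) : moebiusOnSquares n = 0 := by
  simp [moebiusOnSquares_apply, h]

lemma isMultiplicative_moebiusOnSquares : moebiusOnSquares.IsMultiplicative := by
  refine ⟨by simpa using moebiusOnSquares_sq 1, fun {m n} hmn => ?_⟩
  by_cases hsq : IsSquare (m * n)
  · obtain ⟨a, rfl⟩ := (hmn.isSquare_left_of_isSquare_mul hsq).exists_sq
    obtain ⟨b, rfl⟩ := (hmn.symm.isSquare_left_of_isSquare_mul (by rwa [mul_comm])).exists_sq
    rw [← mul_pow, moebiusOnSquares_sq, moebiusOnSquares_sq, moebiusOnSquares_sq,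
      isMultiplicative_moebius.map_mul_of_coprime (Nat.coprime_pow_left_iff two_pos _ _ |>.mp
        (Nat.coprime_pow_right_iff two_pos _ _ |>.mp hmn))]
  · rw [moebiusOnSquares_of_not_isSquare hsq]
    by_cases hm : IsSquare m
    · have hn : ¬IsSquare n := fun hn => hsq (hm.mul hn)
      rw [moebiusOnSquares_of_not_isSquare hn, mul_zero]
    · rw [moebiusOnSquares_of_not_isSquare hm, zero_mul]

lemma moebiusOnSquares_prime_pow {p : ℕ} (hp : p.Prime) (i : ℕ) :
    moebiusOnSquares (p ^ i) = (if i = 0 then 1 else 0) - (if i = 2 then 1 else 0) := by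
  rcases Nat.even_or_odd' i with ⟨j, rfl | rfl⟩
  · rw [pow_mul', moebiusOnSquares_sq]
    rcases j with _ | _ | j
    · simp
    · simp [moebius_apply_prime hp]
    · rw [moebius_apply_prime_pow hp (by omega), if_neg (by omega), if_neg (by omega),
        if_neg (by omega), sub_zero]
  · rw [moebiusOnSquares_of_not_isSquare (by simp [hp.isSquare_pow_iff]), if_neg (by omega),
      if_neg (by omega), sub_zero]

lemma absMoebius_eq_moebiusOnSquares_mul_zeta : absMoebius = moebiusOnSquares * ζ := by
  refine (IsMultiplicative.eq_iff_eq_on_prime_powers _ isMultiplicative_absMoebius _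
    (isMultiplicative_moebiusOnSquares.mul isMultiplicative_zeta.natCast)).mpr fun p i hp => ?_
  rw [coe_mul_zeta_apply, Nat.sum_divisors_prime_pow hp]
  simp_rw [moebiusOnSquares_prime_pow hp, sum_sub_distrib, sum_ite_eq', mem_range]
  rcases i with _ | _ | i
  · simp
  · simp [moebius_apply_prime hp]
  · simp [moebius_apply_prime_pow hp]

lemma absMoebius_mul_moebius : absMoebius * μ = moebiusOnSquares := by
  rw [absMoebius_eq_moebiusOnSquares_mul_zeta, mul_assoc, coe_zeta_mul_moebius, mul_one]

end ArithmeticFunction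

lemma absMoebiusConvMoebius_eq_moebiusOnSquares (n : ℕ) : absMoebiusConvMoebius n = moebiusOnSquares n := by
  rw [← absMoebius_mul_moebius, mul_apply, Nat.sum_divisorsAntidiagonal (absMoebius · * μ ·)]
  rfl

lemma sum_Icc_filter_isSquare {M : Type*} [AddCommMonoid M] (f : ℕ → M) (N : ℕ) :
    ∑ n ∈ Icc 1 N with IsSquare n, f n = ∑ a ∈ Icc 1 N.sqrt, f (a ^ 2) := by
  have hsquares : {n ∈ Icc 1 N | IsSquare n} = (Icc 1 N.sqrt).image (· ^ 2) := by
    ext n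
    simp only [mem_filter, mem_Icc, mem_image, Nat.le_sqrt', Nat.one_le_iff_ne_zero]
    constructor
    · rintro ⟨⟨hn, hnN⟩, r, rfl⟩
      exact ⟨r, ⟨by rintro rfl; simp at hn, by rwa [sq]⟩, sq r⟩
    · rintro ⟨a, ⟨ha, haN⟩, rfl⟩
      exact ⟨⟨pow_ne_zero 2 ha, haN⟩, IsSquare.sq a⟩
  rw [hsquares, sum_image fun a _ b _ h => Nat.pow_left_injective two_ne_zero h]

lemma sum_absMoebiusConvMoebius_div (N : ℕ) :
    ∑ n ∈ Icc 1 N, (absMoebiusConvMoebius n : ℂ) / n =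
      ∑ a ∈ Icc 1 N.sqrt, (μ a : ℂ) / (a : ℂ) ^ 2 := by
  simp_rw [absMoebiusConvMoebius_eq_moebiusOnSquares]
  rw [← sum_filter_of_ne (p := IsSquare) fun n _ h => ?_, sum_Icc_filter_isSquare]
  · simp
  · by_contra hn
    exact h (by rw [moebiusOnSquares_of_not_isSquare hn]; simp)

lemma sum_range_inv_sq_add_le {K : ℕ} (hK : K ≠ 0) (m : ℕ) :
    ∑ i ∈ range m, (((i + (K + 1) : ℕ) : ℝ) ^ 2)⁻¹ ≤ (K : ℝ)⁻¹ := by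
  rw [range_eq_Ico, sum_Ico_add' (fun i : ℕ => ((i : ℝ) ^ 2)⁻¹), zero_add, ← add_assoc,
    Ico_add_one_add_one_eq_Ioc]
  exact (sum_Ioc_inv_sq_le_sub hK (K.le_add_left m)).trans (sub_le_self _ (by positivity))

lemma norm_sum_div_sq_sub_LSeries_two_le {f : ℕ → ℂ} (hf : ∀ n, ‖f n‖ ≤ 1) {K : ℕ}
    (hK : K ≠ 0) : ‖∑ n ∈ Icc 1 K, f n / (n : ℂ) ^ 2 - LSeries f 2‖ ≤ (K : ℝ)⁻¹ := by
  have hsummable : LSeriesSummable f 2 :=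
    LSeriesSummable_of_le_const_mul_rpow (x := 1) (by norm_num) ⟨1, fun n _ => by simpa using hf n⟩
  have hhead : ∑ n ∈ range (K + 1), LSeries.term f 2 n = ∑ n ∈ Icc 1 K, f n / (n : ℂ) ^ 2 := by
    rw [range_eq_Ico, sum_eq_sum_Ico_succ_bot K.succ_pos, LSeries.term_zero, zero_add, zero_add,
      Nat.succ_eq_add_one, Ico_add_one_right_eq_Icc]
    refine sum_congr rfl fun n hn => ?_
    rw [LSeries.term_of_ne_zero (by simp at hn; omega), Complex.cpow_ofNat]
  rw [LSeries, ← hsummable.sum_add_tsum_nat_add (K + 1), hhead, sub_add_cancel_left, norm_neg]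
  have htail : Summable fun n => LSeries.term f 2 (n + (K + 1)) :=
    (summable_nat_add_iff (K + 1)).mpr hsummable
  refine (norm_tsum_le_tsum_norm htail.norm).trans <|
    Real.tsum_le_of_sum_range_le (fun _ => norm_nonneg _) fun m => ?_
  refine (sum_le_sum fun i _ => ?_).trans (sum_range_inv_sq_add_le hK m)
  rw [LSeries.norm_term_eq, if_neg (by omega), div_eq_mul_inv, Complex.re_ofNat, Real.rpow_two]
  exact mul_le_of_le_one_left (by positivity) (hf _)

lemma LSeries_moebius_eq_inv_riemannZeta {s : ℂ} (hs : 1 < s.re) :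
    LSeries (↗μ) s = (riemannZeta s)⁻¹ := by
  rw [← LSeries_zeta_eq_riemannZeta hs]
  exact eq_inv_of_mul_eq_one_right (LSeries_zeta_mul_Lseries_moebius hs)

lemma norm_sum_moebius_div_sq_sub_inv_riemannZeta_two_le {K : ℕ} (hK : K ≠ 0) :
    ‖∑ a ∈ Icc 1 K, (μ a : ℂ) / (a : ℂ) ^ 2 - 1 / riemannZeta 2‖ ≤ (K : ℝ)⁻¹ := by
  rw [one_div, ← LSeries_moebius_eq_inv_riemannZeta (by norm_num)]
  refine norm_sum_div_sq_sub_LSeries_two_le (fun n => ?_) hK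
  rw [Complex.norm_intCast]
  exact_mod_cast abs_moebius_le_one

lemma one_lt_log_five : 1 < Real.log 5 := by
  rw [Real.lt_log_iff_exp_lt (by norm_num)]
  exact Real.exp_one_lt_d9.trans (by norm_num)

lemma inv_sqrt_le_deltaFn {C x : ℝ} (hC₀ : 0 ≤ C)
    (hC : 2 * C ≤ Real.log (Real.log 5) ^ ((1 : ℝ) / 5)) (hx : 5 ≤ x) :
    (√x)⁻¹ ≤ deltaFn C x := by
  rw [Real.sqrt_eq_rpow, ← Real.exp_log (by positivity : 0 < x ^ (1 / 2 : ℝ)), ← Real.exp_neg,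
    Real.log_rpow (by linarith), deltaFn, Real.exp_le_exp, neg_mul, neg_div, neg_le_neg_iff]
  set t := Real.log x
  have ht₅ : Real.log 5 ≤ t := Real.log_le_log (by norm_num) hx
  have ht₁ : 1 ≤ t := one_lt_log_five.le.trans ht₅
  have hloglog₀ : 0 < Real.log (Real.log 5) := Real.log_pos one_lt_log_five
  have hloglog : Real.log (Real.log 5) ≤ Real.log t :=
    Real.log_le_log (zero_lt_one.trans one_lt_log_five) ht₅
  have hroot₀ : 0 < Real.log (Real.log 5) ^ ((1 : ℝ) / 5) := by positivity
  calc C * t ^ ((3 : ℝ) / 5) / Real.log t ^ ((1 : ℝ) / 5)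
      ≤ C * t / Real.log (Real.log 5) ^ ((1 : ℝ) / 5) := by
        gcongr
        exact Real.rpow_le_self_of_one_le ht₁ (by norm_num)
    _ ≤ 1 / 2 * t := by
        rw [div_le_iff₀ hroot₀]
        nlinarith

lemma inv_sqrt_floor_le {x : ℝ} (hx : 1 ≤ x) : ((⌊x⌋₊.sqrt : ℕ) : ℝ)⁻¹ ≤ 2 / √x := by
  set K := ⌊x⌋₊.sqrt
  have hK : 1 ≤ K := Nat.le_sqrt.mpr (Nat.le_floor (by simpa using hx))
  have hxK : √x < K + 1 := by
    rw [Real.sqrt_lt' (by positivity)]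
    exact_mod_cast (Nat.lt_floor_add_one x).trans_le (by exact_mod_cast Nat.lt_succ_sqrt' ⌊x⌋₊)
  have hK' : (1 : ℝ) ≤ K := by exact_mod_cast hK
  rw [le_div_iff₀ (by positivity), inv_mul_le_iff₀ (by positivity)]
  linarith

theorem abs_moebius_conv_moebius_div_sum :
    ∃ C > 0, ∃ C' > 0, ∀ x : ℝ, x > 5 →
      ‖(∑ n ∈ Finset.Icc 1 ⌊x⌋₊, (absMoebiusConvMoebius n : ℂ) / n)
        - 1 / riemannZeta 2‖
      ≤ C' * deltaFn C x := by
  have hC : 0 < Real.log (Real.log 5) ^ ((1 : ℝ) / 5) / 2 := by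
    have := Real.log_pos one_lt_log_five
    positivity
  refine ⟨_, hC, 2, two_pos, fun x hx => ?_⟩
  have hK : ⌊x⌋₊.sqrt ≠ 0 := (Nat.sqrt_pos.mpr (Nat.floor_pos.mpr (by linarith))).ne'
  rw [sum_absMoebiusConvMoebius_div]
  calc _ ≤ ((⌊x⌋₊.sqrt : ℕ) : ℝ)⁻¹ := norm_sum_moebius_div_sq_sub_inv_riemannZeta_two_le hK
    _ ≤ 2 / √x := inv_sqrt_floor_le (by linarith)
    _ = 2 * (√x)⁻¹ := div_eq_mul_inv _ _
    _ ≤ 2 * deltaFn _ x := by gcongr; exact inv_sqrt_le_deltaFn hC.le (by linarith) hx.le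
end

section
/- Assume the Riemann Hypothesis, that all nontrivial zeros ρ = 1/2 + iγ of ζ are simple (ζ′(ρ) ≠ 0), and that there is a constant c > 0 such that Σ_{0 < γ ≤ T} 1/|ζ′(1/2 + iγ)| ≤ c·T (log T)^{1/4} for all T ≥ 14, where the sum runs over ordinates γ of nontrivial zeros of ζ. Then Σ_{0 < γ ≤ T} 1/(γ · |ζ′(1/2 + iγ)|) = O((log T)^{5/4}) as T → ∞, the sum again running over ordinates of nontrivial zeros. -/
/-!
Cut `(14, T]` into the dyadic blocks `(2ᵏ·14, 2ᵏ⁺¹·14]`. On the `k`-th block `1/γ ≤ 2⁻ᵏ/14`, so by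
the hypothesis on the partial sums of `1/|ζ'(ρ)|` up to `2ᵏ⁺¹·14` the block contributes at most
`2c (log T)^{1/4}`. There are `O(log T)` blocks, and the zeros with `γ ≤ 14` contribute a constant.
-/

open Set

theorem Summable.subtype_of_subset {β E : Type*} [AddCommGroup E] [UniformSpace E]
    [IsUniformAddGroup E] [CompleteSpace E] {f : β → E} {s t : Set β} (h : s ⊆ t)
    (hf : Summable fun x : t => f x) : Summable fun x : s => f x :=
  hf.comp_injective (inclusion_injective h)

section DyadicSums

variable {S : Set ℝ} {g : ℝ → ℝ}

lemma summable_of_summable_div_of_subset_Ioc (hg : ∀ t, 0 ≤ g t) {T : ℝ}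
    (hST : S ⊆ Ioc 0 T) (hS' : Summable fun t : S => g t / t) : Summable fun t : S => g t :=
  (hS'.mul_left T).of_nonneg_of_le (fun t => hg t) fun t => by
    obtain ⟨ht₀, htT⟩ := hST t.2
    calc g t = t * (g t / t) := by field_simp
      _ ≤ T * (g t / t) := mul_le_mul_of_nonneg_right htT (div_nonneg (hg t) ht₀.le)

lemma summable_inter_Ioc_div (hg : ∀ t, 0 ≤ g t) (hS : Summable fun t : S => g t)
    {a : ℝ} (ha : 0 < a) (b : ℝ) : Summable fun t : ↥(S ∩ Ioc a b) => g t / t :=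
  ((hS.subtype_of_subset inter_subset_left).div_const a).of_nonneg_of_le
    (fun t => div_nonneg (hg t) (ha.trans t.2.2.1).le)
    (fun t => div_le_div_of_nonneg_left (hg t) ha t.2.2.1.le)

lemma tsum_inter_Ioc_div_le (hg : ∀ t, 0 ≤ g t) (hS : Summable fun t : S => g t)
    {a : ℝ} (ha : 0 < a) (b : ℝ) :
    ∑' t : ↥(S ∩ Ioc a b), g t / t ≤ (∑' t : ↥(S ∩ Iic b), g t) / a := by
  have hsub : S ∩ Ioc a b ⊆ S ∩ Iic b := inter_subset_inter_right S Ioc_subset_Iic_self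
  have hSb : Summable fun t : ↥(S ∩ Iic b) => g t := hS.subtype_of_subset inter_subset_left
  calc ∑' t : ↥(S ∩ Ioc a b), g t / t ≤ ∑' t : ↥(S ∩ Ioc a b), g t / a :=
        (summable_inter_Ioc_div hg hS ha b).tsum_le_tsum
          (fun t => div_le_div_of_nonneg_left (hg t) ha t.2.2.1.le)
          ((hSb.subtype_of_subset hsub).div_const a)
    _ = (∑' t : ↥(S ∩ Ioc a b), g t) / a := tsum_div_const
    _ ≤ (∑' t : ↥(S ∩ Iic b), g t) / a := by
        gcongr
        exact tsum_comp_le_tsum_of_inj hSb (fun t => hg t) (inclusion_injective hsub)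

lemma tsum_inter_Ioc_two_pow_div_le (hg : ∀ t, 0 ≤ g t) (hS : Summable fun t : S => g t)
    {A M : ℝ} (hA : 0 < A) (hM : ∀ B ≥ A, ∑' t : ↥(S ∩ Iic B), g t ≤ M * B) (n : ℕ) :
    ∑' t : ↥(S ∩ Ioc A (2 ^ n * A)), g t / t ≤ 2 * n * M := by
  induction n with
  | zero => simp
  | succ n ih =>
    have hA_le : A ≤ 2 ^ n * A := le_mul_of_one_le_left hA.le (one_le_pow₀ one_le_two)
    have hsplit : S ∩ Ioc A (2 ^ (n + 1) * A) =
        S ∩ Ioc A (2 ^ n * A) ∪ S ∩ Ioc (2 ^ n * A) (2 ^ (n + 1) * A) := by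
      rw [← inter_union_distrib_left, Ioc_union_Ioc_eq_Ioc hA_le (by rw [pow_succ]; linarith)]
    have hblock : ∑' t : ↥(S ∩ Ioc (2 ^ n * A) (2 ^ (n + 1) * A)), g t / t ≤ 2 * M := by
      calc ∑' t : ↥(S ∩ Ioc (2 ^ n * A) (2 ^ (n + 1) * A)), g t / t
          ≤ (∑' t : ↥(S ∩ Iic (2 ^ (n + 1) * A)), g t) / (2 ^ n * A) :=
            tsum_inter_Ioc_div_le hg hS (by positivity) _
        _ ≤ M * (2 ^ (n + 1) * A) / (2 ^ n * A) := by
            gcongr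
            exact hM _ (hA_le.trans (by rw [pow_succ]; linarith))
        _ = 2 * M := by field_simp; ring
    have hdisj : Disjoint (S ∩ Ioc A (2 ^ n * A)) (S ∩ Ioc (2 ^ n * A) (2 ^ (n + 1) * A)) :=
      (Ioc_disjoint_Ioc_of_le le_rfl).mono inter_subset_right inter_subset_right
    -- Without an explicit `f`, unifying `?f ↑t =?= g ↑t / ↑t` unfolds real division and times out.
    rw [hsplit, Summable.tsum_union_disjoint (f := fun t => g t / t) hdisj
      (summable_inter_Ioc_div hg hS hA _) (summable_inter_Ioc_div hg hS (by positivity) _)]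
    push_cast
    linarith

lemma tsum_div_le_tsum_inter_Iic_add (hg : ∀ t, 0 ≤ g t)
    (hS : Summable fun t : S => g t) (hS' : Summable fun t : S => g t / t)
    {A M : ℝ} (hA : 0 < A) (hM : ∀ B ≥ A, ∑' t : ↥(S ∩ Iic B), g t ≤ M * B)
    {n : ℕ} (hSn : S ⊆ Iic (2 ^ n * A)) :
    ∑' t : S, g t / t ≤ ∑' t : ↥(S ∩ Iic A), g t / t + 2 * n * M := by
  have hsplit : S = S ∩ Iic A ∪ S ∩ Ioc A (2 ^ n * A) := by
    rw [← inter_union_distrib_left, Iic_union_Ioc_eq_Iic, inter_eq_left.2 hSn]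
    exact le_mul_of_one_le_left hA.le (one_le_pow₀ one_le_two)
  have hdisj : Disjoint (S ∩ Iic A) (S ∩ Ioc A (2 ^ n * A)) :=
    (Iic_disjoint_Ioc le_rfl).mono inter_subset_right inter_subset_right
  have hS'A : Summable fun t : ↥(S ∩ Iic A) => g t / t :=
    Summable.subtype_of_subset (f := fun t => g t / t) inter_subset_left hS'
  calc ∑' t : S, g t / t = ∑' t : ↥(S ∩ Iic A ∪ S ∩ Ioc A (2 ^ n * A)), g t / t := by
        rw [← hsplit]
    _ = ∑' t : ↥(S ∩ Iic A), g t / t + ∑' t : ↥(S ∩ Ioc A (2 ^ n * A)), g t / t :=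
        Summable.tsum_union_disjoint (f := fun t => g t / t) hdisj hS'A
          (summable_inter_Ioc_div hg hS hA _)
    _ ≤ ∑' t : ↥(S ∩ Iic A), g t / t + 2 * n * M := by
        gcongr
        exact tsum_inter_Ioc_two_pow_div_le hg hS hA hM n

end DyadicSums

lemma exists_le_two_pow_and_le_three_mul_log {T : ℝ} (hT : 2 ≤ T) :
    ∃ n : ℕ, T ≤ 2 ^ n ∧ (n : ℝ) ≤ 3 * Real.log T := by
  have hlog2 := Real.log_two_gt_d9
  refine ⟨⌈Real.logb 2 T⌉₊, ?_, ?_⟩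
  · calc T = 2 ^ Real.logb 2 T := (Real.rpow_logb two_pos (by norm_num) (by linarith)).symm
      _ ≤ 2 ^ (⌈Real.logb 2 T⌉₊ : ℝ) := Real.rpow_le_rpow_of_exponent_le one_le_two (Nat.le_ceil _)
      _ = 2 ^ ⌈Real.logb 2 T⌉₊ := Real.rpow_natCast 2 _
  · have hceil := Nat.ceil_lt_add_one (Real.logb_nonneg one_lt_two (by linarith : 1 ≤ T))
    have hone : 1 ≤ Real.logb 2 T := by
      rw [Real.le_logb_iff_rpow_le one_lt_two (by linarith)]; simpa using hT
    have hlogb : Real.logb 2 T * Real.log 2 = Real.log T := div_mul_cancel₀ _ (by linarith)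
    nlinarith

def zeroOrdinates (T : ℝ) : Set ℝ :=
  {t | 0 < t ∧ t ≤ T ∧ riemannZeta (1 / 2 + t * Complex.I) = 0}

lemma zeroOrdinates_inter_Iic (B T : ℝ) : zeroOrdinates T ∩ Iic B = zeroOrdinates (min B T) := by
  ext t
  simp only [zeroOrdinates, mem_inter_iff, mem_ofPred_eq, mem_Iic, le_min_iff]
  tauto

lemma tsum_zeroOrdinates_inter_Iic_le {g : ℝ → ℝ} {c : ℝ} (hc : 0 ≤ c)
    (hG : ∀ T ≥ 14, ∑' t : zeroOrdinates T, g t ≤ c * T * Real.log T ^ ((1 : ℝ) / 4))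
    {T : ℝ} (hT : 14 ≤ T) (B : ℝ) (hB : 14 ≤ B) :
    ∑' t : ↥(zeroOrdinates T ∩ Iic B), g t ≤ c * Real.log T ^ ((1 : ℝ) / 4) * B := by
  have hmin : 14 ≤ min B T := le_min hB hT
  rw [zeroOrdinates_inter_Iic]
  calc _ ≤ c * min B T * Real.log (min B T) ^ ((1 : ℝ) / 4) := hG _ hmin
    _ ≤ c * B * Real.log T ^ ((1 : ℝ) / 4) :=
      mul_le_mul (mul_le_mul_of_nonneg_left (min_le_left B T) hc)
        (Real.rpow_le_rpow (Real.log_nonneg (by linarith))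
          (Real.log_le_log (by linarith) (min_le_right B T)) (by norm_num))
        (Real.rpow_nonneg (Real.log_nonneg (by linarith)) _) (by positivity)
    _ = c * Real.log T ^ ((1 : ℝ) / 4) * B := by ring

lemma add_two_mul_rpow_quarter_le {W c L : ℝ} {n : ℕ} (hW : 0 ≤ W) (hc : 0 ≤ c) (hL : 1 ≤ L)
    (hn : (n : ℝ) ≤ 3 * L) :
    W + 2 * n * (c * L ^ ((1 : ℝ) / 4)) ≤ (W + 6 * c) * L ^ ((5 : ℝ) / 4) := by
  have hL₁ : 1 ≤ L ^ ((1 : ℝ) / 4) := Real.one_le_rpow hL (by norm_num)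
  have hL₅ : L ^ ((5 : ℝ) / 4) = L * L ^ ((1 : ℝ) / 4) := by
    rw [show (5 : ℝ) / 4 = 1 + 1 / 4 by norm_num, Real.rpow_add (by linarith), Real.rpow_one]
  have hn' := mul_le_mul_of_nonneg_right hn (by positivity : 0 ≤ 2 * c * L ^ ((1 : ℝ) / 4))
  have hW' : W ≤ W * (L * L ^ ((1 : ℝ) / 4)) :=
    le_mul_of_one_le_right hW (one_le_mul_of_one_le_of_one_le hL hL₁)
  rw [hL₅]
  linarith

theorem zero_ordinate_weighted_sum_bound_general
    (hGH : ∃ c > 0, ∀ T : ℝ, T ≥ 14 →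
      (∑' γ : {t : ℝ // 0 < t ∧ t ≤ T ∧ riemannZeta (1 / 2 + t * Complex.I) = 0},
        1 / ‖deriv riemannZeta (1 / 2 + (γ : ℝ) * Complex.I)‖)
      ≤ c * T * (Real.log T) ^ ((1 : ℝ) / 4)) :
    ∃ C > 0, ∃ T₀ : ℝ, ∀ T : ℝ, T ≥ T₀ →
      (∑' γ : {t : ℝ // 0 < t ∧ t ≤ T ∧ riemannZeta (1 / 2 + t * Complex.I) = 0},
        1 / ((γ : ℝ) * ‖deriv riemannZeta (1 / 2 + (γ : ℝ) * Complex.I)‖))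
      ≤ C * (Real.log T) ^ ((5 : ℝ) / 4) := by
  obtain ⟨c, hc, hGH⟩ := hGH
  set g : ℝ → ℝ := fun t => 1 / ‖deriv riemannZeta (1 / 2 + t * Complex.I)‖
  have hg : ∀ t, 0 ≤ g t := fun t => by positivity
  have hw (t : ℝ) : 1 / (t * ‖deriv riemannZeta (1 / 2 + t * Complex.I)‖) = g t / t := by
    rw [div_div, mul_comm]
  simp only [hw]
  set W₀ := ∑' t : zeroOrdinates 14, g t / t
  have hW₀ : 0 ≤ W₀ := tsum_nonneg fun t => div_nonneg (hg t) t.2.1.le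
  refine ⟨W₀ + 6 * c, by linarith, 14, fun T hT => ?_⟩
  change ∑' t : zeroOrdinates T, g t / t ≤ _
  have hL : 1 ≤ Real.log T := by
    rw [Real.le_log_iff_exp_le (by linarith)]
    linarith [Real.exp_one_lt_d9]
  by_cases hS' : Summable fun t : zeroOrdinates T => g t / t
  swap
  · rw [tsum_eq_zero_of_not_summable hS']
    exact mul_nonneg (by linarith) (Real.rpow_nonneg (by linarith) _)
  obtain ⟨n, hTn, hn⟩ := exists_le_two_pow_and_le_three_mul_log (by linarith : (2 : ℝ) ≤ T)
  have hSn : zeroOrdinates T ⊆ Iic (2 ^ n * 14) := fun t ht => by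
    rw [mem_Iic]; linarith [ht.2.1]
  have hbound := tsum_div_le_tsum_inter_Iic_add hg
    (summable_of_summable_div_of_subset_Ioc hg (fun t ht => ⟨ht.1, ht.2.1⟩) hS') hS'
    (by norm_num) (tsum_zeroOrdinates_inter_Iic_le (g := g) hc.le hGH hT) hSn
  rw [zeroOrdinates_inter_Iic, min_eq_left hT] at hbound
  exact hbound.trans (add_two_mul_rpow_quarter_le hW₀ hc.le hL hn)

theorem zero_ordinate_weighted_sum_bound
    (hRH : RiemannHypothesis)
    (hsimple : ∀ ρ : ℂ, riemannZeta ρ = 0 → 0 < ρ.re → ρ.re < 1 →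
      deriv riemannZeta ρ ≠ 0)
    (hGH : ∃ c > 0, ∀ T : ℝ, T ≥ 14 →
      (∑' γ : {t : ℝ // 0 < t ∧ t ≤ T ∧ riemannZeta (1 / 2 + t * Complex.I) = 0},
        1 / ‖deriv riemannZeta (1 / 2 + (γ : ℝ) * Complex.I)‖)
      ≤ c * T * (Real.log T) ^ ((1 : ℝ) / 4)) :
    ∃ C > 0, ∃ T₀ : ℝ, ∀ T : ℝ, T ≥ T₀ →
      (∑' γ : {t : ℝ // 0 < t ∧ t ≤ T ∧ riemannZeta (1 / 2 + t * Complex.I) = 0},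
        1 / ((γ : ℝ) * ‖deriv riemannZeta (1 / 2 + (γ : ℝ) * Complex.I)‖))
      ≤ C * (Real.log T) ^ ((5 : ℝ) / 4) :=
  zero_ordinate_weighted_sum_bound_general hGH
end
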